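/- Let H be a finite-dimensional vector space over K ⊇ ℚ with a nondegenerate symmetric bilinear form ⟨·,·⟩. On H((t)) with symplectic form Ω(a⊗f, b⊗g) = ⟨a,b⟩Res(f(−t)g(t)dt), let φ(t) = 1 + Σ_{i≥1} tⁱφᵢ with φᵢ : H → H linear. Then φ(t) (acting K((t))-linearly) is a symplectomorphism of (H((t)), Ω) if and only if φ(t)φ*(−t) = 1, where φ* is obtained by replacing each φᵢ with its adjoint with respect to ⟨·,·⟩. -/

import Mathlib

/-- The residue symplectic form `Ω(a⊗f, b⊗g) = ⟨a,b⟩ Res f(−t)g(t)dt` on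
`H((t))` (modelled on `ℤ → H`): `Ω(f, g) = ∑ₙ (−1)ⁿ ⟨fₙ, g₋₁₋ₙ⟩`. -/
noncomputable def omPair (K : Type*) [Field K] {H : Type*} [AddCommGroup H] [Module K H]
    (B : H →ₗ[K] H →ₗ[K] K) (f g : ℤ → H) : K :=
  ∑ᶠ n : ℤ, (-1 : K) ^ n * B (f n) (g (-1 - n))

/-- The `K((t))`-linear action of `φ(t) = ∑ tⁱφᵢ` on `H((t))`. -/
noncomputable def loopAct (K : Type*) [Field K] {H : Type*} [AddCommGroup H] [Module K H]
    (φ : ℕ → (H →ₗ[K] H)) (f : ℤ → H) : ℤ → H :=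
  fun n => ∑ᶠ i : ℕ, φ i (f (n - (i : ℤ)))

open Finset

section Aux

/-- In power series over a (possibly noncommutative) ring, a right inverse of a
series with constant coefficient `1` is also a left inverse. -/
private lemma ps_flip {E : Type*} [Ring E] {U V : PowerSeries E}
    (hU : PowerSeries.constantCoeff U = 1) (h : U * V = 1) : V * U = 1 := by
  have hu : PowerSeries.constantCoeff U = ((1 : Eˣ) : E) := by simpa using hU
  have h1 : PowerSeries.invOfUnit U 1 * U = 1 := PowerSeries.invOfUnit_mul U 1 hu
  have h2 : V = PowerSeries.invOfUnit U 1 := by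
    calc V = 1 * V := (one_mul V).symm
    _ = PowerSeries.invOfUnit U 1 * U * V := by rw [h1]
    _ = PowerSeries.invOfUnit U 1 * (U * V) := mul_assoc _ _ _
    _ = PowerSeries.invOfUnit U 1 := by rw [h, mul_one]
  rw [h2, h1]

variable {K : Type*} [Field K] {H : Type*} [AddCommGroup H] [Module K H]

private def singleF (p : ℤ) (a : H) : ℤ → H := fun m => if m = p then a else 0

private lemma singleF_bdd (p : ℤ) (a : H) : ∀ k < p, singleF p a k = 0 := by
  intro k hk
  simp [singleF, hk.ne]

private lemma loopAct_eq_sum (φ : ℕ → H →ₗ[K] H) {f : ℤ → H} {N : ℤ}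
    (hf : ∀ k < N, f k = 0) {n : ℤ} {R : ℕ} (hR : n - N < R) :
    loopAct K φ f n = ∑ i ∈ range R, φ i (f (n - i)) := by
  show (∑ᶠ i : ℕ, φ i (f (n - (i : ℤ)))) = _
  apply finsum_eq_finset_sum_of_support_subset
  intro i hi
  simp only [Function.mem_support, ne_eq] at hi
  simp only [coe_range, Set.mem_Iio]
  by_contra hc
  push_neg at hc
  exact hi (by rw [hf (n - i) (by omega), map_zero])

private lemma loopAct_bdd (φ : ℕ → H →ₗ[K] H) {f : ℤ → H} {N : ℤ}
    (hf : ∀ k < N, f k = 0) : ∀ n < N, loopAct K φ f n = 0 := by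
  intro n hn
  show (∑ᶠ i : ℕ, φ i (f (n - (i : ℤ)))) = 0
  apply finsum_eq_zero_of_forall_eq_zero
  intro i
  rw [hf _ (by omega), map_zero]

private lemma omPair_eq_sum (B : H →ₗ[K] H →ₗ[K] K) {f g : ℤ → H} {N M : ℤ}
    (hf : ∀ k < N, f k = 0) (hg : ∀ k < M, g k = 0) :
    omPair K B f g = ∑ n ∈ Finset.Icc N (-1 - M), (-1 : K) ^ n * B (f n) (g (-1 - n)) := by
  show (∑ᶠ n : ℤ, (-1 : K) ^ n * B (f n) (g (-1 - n))) = _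
  apply finsum_eq_finset_sum_of_support_subset
  intro n hn
  simp only [Function.mem_support, ne_eq] at hn
  simp only [coe_Icc, Set.mem_Icc]
  by_contra hc
  push_neg at hc
  apply hn
  rcases lt_or_ge n N with h | h
  · rw [hf n h]; simp
  · rw [hg (-1 - n) (by omega)]; simp

private lemma loopAct_single (φ : ℕ → H →ₗ[K] H) (p : ℤ) (a : H) (n : ℤ) :
    loopAct K φ (singleF p a) n = if p ≤ n then φ (n - p).toNat a else 0 := by
  show (∑ᶠ i : ℕ, φ i (singleF p a (n - (i : ℤ)))) = _
  by_cases h : p ≤ n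
  · rw [if_pos h, finsum_eq_single _ ((n - p).toNat)]
    · have h1 : n - ((n - p).toNat : ℤ) = p := by omega
      simp only [singleF]
      rw [if_pos h1]
    · intro i hi
      have h2 : ¬(n - (i : ℤ) = p) := by omega
      simp [singleF, h2]
  · rw [if_neg h]
    apply finsum_eq_zero_of_forall_eq_zero
    intro i
    have h2 : ¬(n - (i : ℤ) = p) := by omega
    simp [singleF, h2]

private lemma Icc_eq_image (m : ℕ) :
    Finset.Icc (0 : ℤ) (m : ℤ) = (range (m + 1)).image (fun k : ℕ => (k : ℤ)) := by
  ext x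
  simp only [mem_Icc, mem_image, mem_range]
  constructor
  · intro hx
    exact ⟨x.toNat, by omega, by omega⟩
  · rintro ⟨k, hk, rfl⟩
    omega

/-- From the symplectomorphism property, applied to delta functions, deduce the
pointwise pairing identity. -/
private lemma symp_to_P (B : H →ₗ[K] H →ₗ[K] K) (φ : ℕ → (H →ₗ[K] H))
    (hyp : ∀ f g : ℤ → H, (∃ N : ℤ, ∀ n < N, f n = 0) → (∃ N : ℤ, ∀ n < N, g n = 0) →
      omPair K B (loopAct K φ f) (loopAct K φ g) = omPair K B f g)
    (m : ℕ) (a b : H) :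
    ∑ i ∈ range (m + 1), (-1 : K) ^ i * B (φ i a) (φ (m - i) b)
      = if m = 0 then B a b else 0 := by
  have hf := singleF_bdd (0 : ℤ) a
  have hg := singleF_bdd (-1 - (m : ℤ)) b
  have h := hyp _ _ ⟨0, hf⟩ ⟨_, hg⟩
  have hr : omPair K B (singleF 0 a) (singleF (-1 - (m : ℤ)) b)
      = if m = 0 then B a b else 0 := by
    show (∑ᶠ n : ℤ, (-1 : K) ^ n * B (singleF 0 a n) (singleF (-1 - (m : ℤ)) b (-1 - n))) = _
    rw [finsum_eq_single _ (0 : ℤ)]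
    · by_cases hm : m = 0
      · subst hm; simp [singleF]
      · have h2 : ¬((-1 : ℤ) = -1 - (m : ℤ)) := by omega
        simp [singleF, h2, hm]
    · intro n hn
      simp [singleF, hn]
  have hl : omPair K B (loopAct K φ (singleF 0 a)) (loopAct K φ (singleF (-1 - (m : ℤ)) b))
      = ∑ i ∈ range (m + 1), (-1 : K) ^ i * B (φ i a) (φ (m - i) b) := by
    rw [omPair_eq_sum B (loopAct_bdd φ hf) (loopAct_bdd φ hg)]
    have he : (-1 : ℤ) - (-1 - (m : ℤ)) = (m : ℤ) := by ring
    rw [he, Icc_eq_image m,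
      Finset.sum_image (by intro x _ y _ hxy; simp only at hxy; exact_mod_cast hxy)]
    apply Finset.sum_congr rfl
    intro k hk
    rw [mem_range] at hk
    rw [loopAct_single, loopAct_single,
      if_pos (by omega : (0 : ℤ) ≤ (k : ℤ)),
      if_pos (by omega : -1 - (m : ℤ) ≤ -1 - (k : ℤ))]
    have e1 : ((k : ℤ) - 0).toNat = k := by omega
    have e2 : ((-1 - (k : ℤ)) - (-1 - (m : ℤ))).toNat = m - k := by omega
    rw [e1, e2, zpow_natCast]
  rw [hl, hr] at h
  exact h

/-- The pointwise pairing identity is equivalent to the operator identity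
`ψ(−t)φ(t) = 1`. -/
private lemma P_iff_T (B : H →ₗ[K] H →ₗ[K] K)
    (hBsym : ∀ a b, B a b = B b a) (hBnd : ∀ a, (∀ b, B a b = 0) → a = 0)
    (φ ψ : ℕ → (H →ₗ[K] H))
    (hadj : ∀ i a b, B (φ i a) b = B a (ψ i b)) :
    (∀ (m : ℕ) (a b : H), ∑ i ∈ range (m + 1), (-1 : K) ^ i * B (φ i a) (φ (m - i) b)
        = if m = 0 then B a b else 0) ↔
    (∀ m : ℕ, ∑ i ∈ range (m + 1), ((-1 : K) ^ i) • ((ψ i) ∘ₗ (φ (m - i)))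
        = if m = 0 then LinearMap.id else 0) := by
  have key : ∀ (m : ℕ) (a b : H),
      ∑ i ∈ range (m + 1), (-1 : K) ^ i * B (φ i a) (φ (m - i) b)
        = B a ((∑ i ∈ range (m + 1), ((-1 : K) ^ i) • ((ψ i) ∘ₗ (φ (m - i)))) b) := by
    intro m a b
    rw [LinearMap.sum_apply, map_sum]
    apply Finset.sum_congr rfl
    intro i _
    rw [LinearMap.smul_apply, LinearMap.comp_apply, map_smul, smul_eq_mul,
      ← hadj i a (φ (m - i) b)]
  constructor
  · intro hP m
    ext b
    rw [← sub_eq_zero]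
    apply hBnd
    intro c
    rw [hBsym, map_sub, ← key m c b, hP m c b]
    by_cases hm : m = 0 <;> simp [hm]
  · intro hT m a b
    rw [key m a b, hT m]
    by_cases hm : m = 0 <;> simp [hm]

/-- `ψ(−t)φ(t) = 1` iff `φ(t)ψ(−t) = 1`, via power series over `End K H`. -/
private lemma T_iff_S (φ ψ : ℕ → (H →ₗ[K] H))
    (hφ0 : φ 0 = LinearMap.id) (hψ0 : ψ 0 = LinearMap.id) :
    (∀ m : ℕ, ∑ i ∈ range (m + 1), ((-1 : K) ^ i) • ((ψ i) ∘ₗ (φ (m - i)))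
        = if m = 0 then LinearMap.id else 0) ↔
    (∀ n : ℕ, (∑ j ∈ Finset.range (n + 1), ((-1 : K) ^ j) • ((φ (n - j)) ∘ₗ (ψ j)))
      = if n = 0 then LinearMap.id else 0) := by
  set U : PowerSeries (Module.End K H) := PowerSeries.mk fun i => φ i with hU
  set V : PowerSeries (Module.End K H) := PowerSeries.mk fun j => ((-1 : K) ^ j • ψ j) with hV
  have hcU : PowerSeries.constantCoeff U = 1 := by
    rw [hU, PowerSeries.constantCoeff_mk, hφ0, Module.End.one_eq_id]
  have hcV : PowerSeries.constantCoeff V = 1 := by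
    rw [hV, PowerSeries.constantCoeff_mk, hψ0, pow_zero, one_smul, Module.End.one_eq_id]
  have cVU : ∀ m : ℕ, (PowerSeries.coeff m) (V * U)
      = ∑ i ∈ range (m + 1), ((-1 : K) ^ i) • ((ψ i) ∘ₗ (φ (m - i))) := by
    intro m
    rw [PowerSeries.coeff_mul, Finset.Nat.sum_antidiagonal_eq_sum_range_succ
      (fun i j => (PowerSeries.coeff i V)
        * (PowerSeries.coeff j U))]
    apply Finset.sum_congr rfl
    intro i _
    rw [hU, hV, PowerSeries.coeff_mk, PowerSeries.coeff_mk, smul_mul_assoc,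
      Module.End.mul_eq_comp]
  have cUV : ∀ n : ℕ, (PowerSeries.coeff n) (U * V)
      = ∑ j ∈ range (n + 1), ((-1 : K) ^ j) • ((φ (n - j)) ∘ₗ (ψ j)) := by
    intro n
    rw [PowerSeries.coeff_mul]
    rw [← Finset.Nat.sum_antidiagonal_swap]
    simp only [Prod.fst_swap, Prod.snd_swap]
    rw [Finset.Nat.sum_antidiagonal_eq_sum_range_succ
      (fun i j => (PowerSeries.coeff j U)
        * (PowerSeries.coeff i V))]
    apply Finset.sum_congr rfl
    intro j _
    rw [hU, hV, PowerSeries.coeff_mk, PowerSeries.coeff_mk, mul_smul_comm,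
      Module.End.mul_eq_comp]
  have c1 : ∀ k : ℕ, (PowerSeries.coeff k) (1 : PowerSeries (Module.End K H))
      = if k = 0 then LinearMap.id else 0 := by
    intro k
    rw [PowerSeries.coeff_one]
    by_cases hk : k = 0 <;> simp [hk, Module.End.one_eq_id]
  constructor
  · intro hT n
    have hVU : V * U = 1 := by
      ext m
      rw [cVU m, hT m, c1 m]
    have hUV : U * V = 1 := ps_flip hcV hVU
    rw [← cUV n, hUV, c1 n]
  · intro hS m
    have hUV : U * V = 1 := by
      ext n
      rw [cUV n, hS n, c1 n]
    have hVU : V * U = 1 := ps_flip hcU hUV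
    rw [← cVU m, hVU, c1 m]

/-- From the pointwise pairing identity, deduce the symplectomorphism property. -/
private lemma P_to_symp (B : H →ₗ[K] H →ₗ[K] K) (φ : ℕ → (H →ₗ[K] H))
    (hP : ∀ (m : ℕ) (a b : H), ∑ i ∈ range (m + 1), (-1 : K) ^ i * B (φ i a) (φ (m - i) b)
        = if m = 0 then B a b else 0)
    (f g : ℤ → H) (hf : ∃ N : ℤ, ∀ n < N, f n = 0) (hg : ∃ N : ℤ, ∀ n < N, g n = 0) :
    omPair K B (loopAct K φ f) (loopAct K φ g) = omPair K B f g := by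
  obtain ⟨N, hf⟩ := hf
  obtain ⟨M, hg⟩ := hg
  set L : ℤ := -1 - M with hL
  set R : ℕ := (-1 - M - N).toNat + 1 with hR
  rw [omPair_eq_sum B (loopAct_bdd φ hf) (loopAct_bdd φ hg), omPair_eq_sum B hf hg]
  have expand : ∀ n ∈ Finset.Icc N L,
      (-1 : K) ^ n * B (loopAct K φ f n) (loopAct K φ g (-1 - n))
      = ∑ i ∈ range R, ∑ j ∈ range R,
          (-1 : K) ^ n * B (φ i (f (n - i))) (φ j (g (-1 - n - j))) := by
    intro n hn
    rw [mem_Icc] at hn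
    rw [loopAct_eq_sum φ hf (show n - N < (R : ℤ) by omega),
      loopAct_eq_sum φ hg (show (-1 - n) - M < (R : ℤ) by omega)]
    simp only [map_sum, LinearMap.sum_apply, Finset.mul_sum]
    exact Finset.sum_comm
  have shift : ∀ i ∈ range R, ∀ j ∈ range R, (∑ n ∈ Finset.Icc N L,
        (-1 : K) ^ n * B (φ i (f (n - i))) (φ j (g (-1 - n - j))))
      = ∑ s ∈ Finset.Icc N L,
        (-1 : K) ^ (s + (i : ℤ)) * B (φ i (f s)) (φ j (g (-1 - s - i - j))) := by
    intro i _ j _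
    have step1 : (∑ n ∈ Finset.Icc N L,
          (-1 : K) ^ n * B (φ i (f (n - i))) (φ j (g (-1 - n - j))))
        = ∑ n ∈ Finset.Icc (N + (i : ℤ)) L,
          (-1 : K) ^ n * B (φ i (f (n - i))) (φ j (g (-1 - n - j))) := by
      apply (Finset.sum_subset (Finset.Icc_subset_Icc_left (by omega)) _).symm
      intro n hn hn'
      rw [mem_Icc] at hn
      rw [mem_Icc, not_and_or] at hn'
      have : f (n - i) = 0 := hf _ (by omega)
      rw [this, map_zero, map_zero, LinearMap.zero_apply, mul_zero]
    have step2 : (∑ n ∈ Finset.Icc (N + (i : ℤ)) L,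
          (-1 : K) ^ n * B (φ i (f (n - i))) (φ j (g (-1 - n - j))))
        = ∑ s ∈ Finset.Icc N (L - (i : ℤ)),
          (-1 : K) ^ (s + (i : ℤ)) * B (φ i (f s)) (φ j (g (-1 - s - i - j))) := by
      rw [show Finset.Icc (N + (i : ℤ)) L = Finset.Icc (N + (i : ℤ)) ((L - (i : ℤ)) + (i : ℤ))
          from by rw [sub_add_cancel],
        ← Finset.map_add_right_Icc, Finset.sum_map]
      apply Finset.sum_congr rfl
      intro s _
      have e0 : (addRightEmbedding (i : ℤ)) s = s + (i : ℤ) := rfl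
      rw [e0, show s + (i : ℤ) - (i : ℤ) = s from by ring,
        show -1 - (s + (i : ℤ)) - (j : ℤ) = -1 - s - i - j from by ring]
    have step3 : (∑ s ∈ Finset.Icc N (L - (i : ℤ)),
          (-1 : K) ^ (s + (i : ℤ)) * B (φ i (f s)) (φ j (g (-1 - s - i - j))))
        = ∑ s ∈ Finset.Icc N L,
          (-1 : K) ^ (s + (i : ℤ)) * B (φ i (f s)) (φ j (g (-1 - s - i - j))) := by
      apply Finset.sum_subset (Finset.Icc_subset_Icc_right (by omega))
      intro s hs hs'
      rw [mem_Icc] at hs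
      rw [mem_Icc, not_and_or] at hs'
      have : g (-1 - s - i - j) = 0 := hg _ (by omega)
      rw [this, map_zero, map_zero, mul_zero]
    rw [step1, step2, step3]
  have inner : ∀ s ∈ Finset.Icc N L,
      (∑ i ∈ range R, ∑ j ∈ range R,
        (-1 : K) ^ (s + (i : ℤ)) * B (φ i (f s)) (φ j (g (-1 - s - i - j))))
      = (-1 : K) ^ s * B (f s) (g (-1 - s)) := by
    intro s hs
    rw [mem_Icc] at hs
    rw [← Finset.sum_product']
    have vanish : ∀ p ∈ (range R ×ˢ range R),
        ((-1 : K) ^ (s + (p.1 : ℤ)) * B (φ p.1 (f s)) (φ p.2 (g (-1 - s - p.1 - p.2))) ≠ 0)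
        → p.1 + p.2 < R := by
      intro p _ hne
      by_contra hc
      apply hne
      have : g (-1 - s - p.1 - p.2) = 0 := hg _ (by omega)
      rw [this, map_zero, map_zero, mul_zero]
    rw [← Finset.sum_filter_of_ne vanish]
    have tri : (∑ p ∈ (range R ×ˢ range R).filter (fun p : ℕ × ℕ => p.1 + p.2 < R),
          (-1 : K) ^ (s + (p.1 : ℤ)) * B (φ p.1 (f s)) (φ p.2 (g (-1 - s - p.1 - p.2))))
        = ∑ m ∈ range R, ∑ i ∈ range (m + 1),
          (-1 : K) ^ (s + (i : ℤ)) * B (φ i (f s)) (φ (m - i) (g (-1 - s - m))) := by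
      rw [Finset.sum_sigma']
      apply Finset.sum_nbij' (fun p : ℕ × ℕ => (⟨p.1 + p.2, p.1⟩ : Σ _ : ℕ, ℕ))
        (fun x : Σ _ : ℕ, ℕ => ((x.2, x.1 - x.2) : ℕ × ℕ))
      · intro p hp
        simp only [mem_filter, mem_product, mem_range] at hp
        simp only [mem_sigma, mem_range]
        omega
      · intro x hx
        simp only [mem_sigma, mem_range] at hx
        simp only [mem_filter, mem_product, mem_range]
        omega
      · intro p hp
        obtain ⟨p1, p2⟩ := p
        simp only [mem_filter, mem_product, mem_range] at hp
        dsimp only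
        simp only [Prod.mk.injEq, true_and, and_true]
        omega
      · intro x hx
        obtain ⟨m, i⟩ := x
        simp only [mem_sigma, mem_range] at hx
        dsimp only
        simp only [Sigma.mk.inj_iff, heq_eq_eq, true_and, and_true]
        omega
      · intro p hp
        simp only [mem_filter, mem_product, mem_range] at hp
        have e1 : (p.1 + p.2) - p.1 = p.2 := by omega
        have e2 : -1 - s - (p.1 : ℤ) - (p.2 : ℤ) = -1 - s - ((p.1 + p.2 : ℕ) : ℤ) := by
          push_cast; ring
        rw [e1, e2]
    rw [tri]
    have hm : ∀ m ∈ range R,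
        (∑ i ∈ range (m + 1),
          (-1 : K) ^ (s + (i : ℤ)) * B (φ i (f s)) (φ (m - i) (g (-1 - s - m))))
        = if m = 0 then (-1 : K) ^ s * B (f s) (g (-1 - s)) else 0 := by
      intro m _
      have hsgn : ∀ i : ℕ, (-1 : K) ^ (s + (i : ℤ)) = (-1 : K) ^ s * (-1 : K) ^ i := by
        intro i
        rw [zpow_add₀ (by norm_num : (-1 : K) ≠ 0), zpow_natCast]
      have : (∑ i ∈ range (m + 1),
            (-1 : K) ^ (s + (i : ℤ)) * B (φ i (f s)) (φ (m - i) (g (-1 - s - m))))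
          = (-1 : K) ^ s * ∑ i ∈ range (m + 1),
            (-1 : K) ^ i * B (φ i (f s)) (φ (m - i) (g (-1 - s - m))) := by
        rw [Finset.mul_sum]
        exact Finset.sum_congr rfl fun i _ => by rw [hsgn i, mul_assoc]
      rw [this, hP m (f s) (g (-1 - s - m))]
      by_cases hm0 : m = 0
      · subst hm0
        simp
      · simp [hm0]
    rw [Finset.sum_congr rfl hm, Finset.sum_ite_eq' (range R) 0
      (fun _ => (-1 : K) ^ s * B (f s) (g (-1 - s))),
      if_pos (by rw [mem_range]; omega)]

  calc (∑ n ∈ Finset.Icc N L,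
        (-1 : K) ^ n * B (loopAct K φ f n) (loopAct K φ g (-1 - n)))
      = ∑ n ∈ Finset.Icc N L, ∑ i ∈ range R, ∑ j ∈ range R,
          (-1 : K) ^ n * B (φ i (f (n - i))) (φ j (g (-1 - n - j))) :=
        Finset.sum_congr rfl expand
    _ = ∑ i ∈ range R, ∑ n ∈ Finset.Icc N L, ∑ j ∈ range R,
          (-1 : K) ^ n * B (φ i (f (n - i))) (φ j (g (-1 - n - j))) := Finset.sum_comm
    _ = ∑ i ∈ range R, ∑ j ∈ range R, ∑ n ∈ Finset.Icc N L,
          (-1 : K) ^ n * B (φ i (f (n - i))) (φ j (g (-1 - n - j))) :=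
        Finset.sum_congr rfl fun i _ => Finset.sum_comm
    _ = ∑ i ∈ range R, ∑ j ∈ range R, ∑ s ∈ Finset.Icc N L,
          (-1 : K) ^ (s + (i : ℤ)) * B (φ i (f s)) (φ j (g (-1 - s - i - j))) :=
        Finset.sum_congr rfl fun i hi => Finset.sum_congr rfl fun j hj => shift i hi j hj
    _ = ∑ i ∈ range R, ∑ s ∈ Finset.Icc N L, ∑ j ∈ range R,
          (-1 : K) ^ (s + (i : ℤ)) * B (φ i (f s)) (φ j (g (-1 - s - i - j))) :=
        Finset.sum_congr rfl fun i _ => Finset.sum_comm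
    _ = ∑ s ∈ Finset.Icc N L, ∑ i ∈ range R, ∑ j ∈ range R,
          (-1 : K) ^ (s + (i : ℤ)) * B (φ i (f s)) (φ j (g (-1 - s - i - j))) :=
        Finset.sum_comm
    _ = ∑ s ∈ Finset.Icc N L, (-1 : K) ^ s * B (f s) (g (-1 - s)) :=
        Finset.sum_congr rfl inner

end Aux

/-- for finite-dimensional `H` with nondegenerate symmetric
pairing, `φ(t) = 1 + ∑_{i≥1} tⁱφᵢ` is a symplectomorphism of `(H((t)), Ω)` iff
`φ(t)φ*(−t) = 1`, i.e. `∑_{i+j=n} (−1)ʲ φᵢ ∘ φⱼ* = δ_{n,0}·id` for all `n`,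
where `φⱼ* = ψ j` is the adjoint with respect to `⟨·,·⟩`. -/
theorem stmt16 (K : Type*) [Field K] [CharZero K]
    (H : Type*) [AddCommGroup H] [Module K H] [Module.Finite K H]
    (B : H →ₗ[K] H →ₗ[K] K)
    (hBsym : ∀ a b, B a b = B b a)
    (hBnd : ∀ a, (∀ b, B a b = 0) → a = 0)
    (φ ψ : ℕ → (H →ₗ[K] H))
    (hφ0 : φ 0 = LinearMap.id) (hψ0 : ψ 0 = LinearMap.id)
    (hadj : ∀ i a b, B (φ i a) b = B a (ψ i b)) :
    (∀ f g : ℤ → H, (∃ N : ℤ, ∀ n < N, f n = 0) → (∃ N : ℤ, ∀ n < N, g n = 0) →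
      omPair K B (loopAct K φ f) (loopAct K φ g) = omPair K B f g) ↔
    (∀ n : ℕ, (∑ j ∈ Finset.range (n + 1), ((-1 : K) ^ j) • ((φ (n - j)) ∘ₗ (ψ j)))
      = if n = 0 then LinearMap.id else 0) := by
  constructor
  · intro h1
    exact (T_iff_S φ ψ hφ0 hψ0).mp ((P_iff_T B hBsym hBnd φ ψ hadj).mp
      (fun m a b => symp_to_P B φ h1 m a b))
  · intro h4
    exact fun f g hf hg => P_to_symp B φ
      ((P_iff_T B hBsym hBnd φ ψ hadj).mpr ((T_iff_S φ ψ hφ0 hψ0).mpr h4)) f g hf hg
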